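/- Let τ : [0,1] → ℝ be the Takagi function, τ(t) = Σ_{j≥0} ⟨2^j t⟩ / 2^j, where ⟨x⟩ denotes the distance from x to the nearest integer. Then the function f : [0,1] → ℂ defined by f(t) = t + i·τ(t) belongs to S. -/

import Mathlib

noncomputable section
open MeasureTheory Set

/-- `e(z) = exp(2πiz)`. -/
def e (z : ℂ) : ℂ := Complex.exp (2 * Real.pi * Complex.I * z)

/-- Fourier coefficient `f̂(h) = ∫₀¹ f(t) e(-ht) dt`. -/
def fourierCoeff01 (f : ℝ → ℂ) (h : ℤ) : ℂ := ∫ t in (0:ℝ)..(1:ℝ), f t * e (-(h : ℂ) * (t : ℂ))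

/-- The set `S`: continuous `f : [0,1] → ℂ` with `f(0)=0`, `f(1)` real in `[-2,2]`, and
`g(t) = f(t) - t·f(1)` has purely imaginary Fourier coefficients with `|ĝ(h)| ≤ 1/(π|h|)`. -/
def memS (f : ℝ → ℂ) : Prop :=
  ContinuousOn f (Set.Icc 0 1) ∧ f 0 = 0 ∧ (f 1).im = 0 ∧ |(f 1).re| ≤ 2 ∧
  ∀ h : ℤ, h ≠ 0 →
    (fourierCoeff01 (fun t => f t - (t : ℂ) * f 1) h).re = 0 ∧
    ‖fourierCoeff01 (fun t => f t - (t : ℂ) * f 1) h‖ ≤ 1 / (Real.pi * |(h : ℝ)|)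

/-- Takagi function: τ(t) = Σ_{j≥0} ⟨2^j t⟩ / 2^j, ⟨x⟩ = distance to nearest integer. -/
def takagi (t : ℝ) : ℝ := ∑' j : ℕ, |2 ^ j * t - round (2 ^ j * t)| / 2 ^ j

/-! Since `τ(1) = 0`, the function `g` is `i·τ`, so everything comes down to `τ̂(h)`.
The Fourier coefficients of `t ↦ ⟨N t⟩` vanish unless `N ∣ h`, where they are those of the
tent map `⟨·⟩` at `h / N`; the tent map has coefficient `(1 - (-1)^m)² / (2πim)²`, which is
`0` at even and `-1/(π²m²)` at odd frequencies `m`. Hence in `τ̂(h) = ∑ⱼ 2⁻ʲ (⟨2ʲ·⟩)^(h)` only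
`j = v₂(h)` contributes, `τ̂(h) = -2^{v₂(h)}/(π²h²)` is real, and `2^{v₂(h)} ≤ |h|` gives the
bound. -/

open Complex intervalIntegral Real

lemma e_add (a b : ℂ) : e (a + b) = e a * e b := by
  simp only [e, mul_add, Complex.exp_add]

lemma e_intCast (n : ℤ) : e n = 1 := by
  rw [e, show 2 * (π : ℂ) * I * n = n * (2 * π * I) by ring]
  exact exp_int_mul_two_pi_mul_I n

lemma e_eq_one_iff {z : ℂ} : e z = 1 ↔ ∃ n : ℤ, z = n := by
  simp only [e, Complex.exp_eq_one_iff]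
  refine exists_congr fun n => ?_
  rw [mul_comm (n : ℂ), mul_right_inj' two_pi_I_ne_zero]

lemma norm_e_ofReal (x : ℝ) : ‖e x‖ = 1 := by
  rw [e, show 2 * (π : ℂ) * I * x = (2 * π * x : ℝ) * I by push_cast; ring]
  exact norm_exp_ofReal_mul_I _

lemma norm_e_neg_intCast_mul (h : ℤ) (t : ℝ) : ‖e (-(h : ℂ) * t)‖ = 1 := by
  rw [show -(h : ℂ) * t = (-h * t : ℝ) by push_cast; ring]
  exact norm_e_ofReal _

lemma periodic_e_neg_intCast_mul (h : ℤ) :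
    Function.Periodic (fun t : ℝ => e (-(h : ℂ) * t)) 1 := by
  intro t
  simp only [ofReal_add, ofReal_one, mul_add, mul_one, e_add, ← Int.cast_neg, e_intCast]

lemma continuous_e_neg_intCast_mul (h : ℤ) : Continuous (fun t : ℝ => e (-(h : ℂ) * t)) := by
  unfold e; fun_prop

lemma fourierCoeff01_const_mul (c : ℂ) (f : ℝ → ℂ) (h : ℤ) :
    fourierCoeff01 (fun t => c * f t) h = c * fourierCoeff01 f h := by
  simp only [fourierCoeff01, mul_assoc, intervalIntegral.integral_const_mul]

lemma hasSum_fourierCoeff01 {F : ℕ → ℝ → ℂ} {u : ℕ → ℝ} (hF : ∀ j, Continuous (F j))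
    (hu : Summable u) (hFu : ∀ j t, ‖F j t‖ ≤ u j) (h : ℤ) :
    HasSum (fun j => fourierCoeff01 (F j) h) (fourierCoeff01 (fun t => ∑' j, F j t) h) := by
  unfold fourierCoeff01
  refine hasSum_integral_of_dominated_convergence (fun j _ => u j)
    (fun j => ((hF j).mul (continuous_e_neg_intCast_mul h)).aestronglyMeasurable)
    (fun j => ae_of_all _ fun t _ => ?_) (ae_of_all _ fun _ _ => hu) intervalIntegrable_const
    (ae_of_all _ fun t _ => ((hu.of_norm_bounded (hFu · t)).hasSum.mul_right _))
  rw [norm_mul, norm_e_neg_intCast_mul, mul_one]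
  exact hFu j t

lemma fourierCoeff01_comp_nat_mul_mul {φ : ℝ → ℂ} (hφ : Function.Periodic φ 1)
    (hφc : Continuous φ) {N : ℕ} (hN : N ≠ 0) (m : ℤ) :
    fourierCoeff01 (fun t => φ (N * t)) (N * m) = fourierCoeff01 φ m := by
  set Ψ : ℝ → ℂ := fun u => φ u * e (-(m : ℂ) * u)
  have hΨ : Function.Periodic Ψ 1 := hφ.mul (periodic_e_neg_intCast_mul m)
  have hΨc : Continuous Ψ := hφc.mul (continuous_e_neg_intCast_mul m)
  have hcomp :
      fourierCoeff01 (fun t => φ (N * t)) (N * m) = ∫ t in (0 : ℝ)..1, Ψ (N * t) := by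
    refine integral_congr fun t _ => ?_
    simp only [Ψ]
    push_cast
    ring_nf
  have hperiods := hΨ.intervalIntegral_add_zsmul_eq N 0 fun _ _ => hΨc.intervalIntegrable _ _
  simp only [zero_add, zsmul_eq_mul, mul_one, Int.cast_natCast] at hperiods
  rw [hcomp, integral_comp_mul_left Ψ (Nat.cast_ne_zero.mpr hN), mul_zero, mul_one, hperiods,
    real_smul, ← mul_assoc, ofReal_inv, ofReal_natCast,
    inv_mul_cancel₀ (Nat.cast_ne_zero.mpr hN), one_mul]
  rfl

/-- Shifting by `1 / N` multiplies the integrand by `e (-h / N) ≠ 1` but does not change the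
integral over a period. -/
lemma fourierCoeff01_comp_nat_mul_of_not_dvd {φ : ℝ → ℂ} (hφ : Function.Periodic φ 1)
    {N : ℕ} (hN : N ≠ 0) {h : ℤ} (hdvd : ¬(N : ℤ) ∣ h) :
    fourierCoeff01 (fun t => φ (N * t)) h = 0 := by
  have hNR : (N : ℝ) ≠ 0 := Nat.cast_ne_zero.mpr hN
  set G : ℝ → ℂ := fun t => φ (N * t) * e (-(h : ℂ) * t)
  have hG : Function.Periodic G 1 := fun t => by
    have hφN := hφ.nat_mul N (N * t)
    rw [mul_one] at hφN
    simp only [G, mul_add, mul_one, hφN]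
    exact congrArg _ (periodic_e_neg_intCast_mul h t)
  have hshift (t : ℝ) : G (t + 1 / N) = e (-(h : ℂ) / N) * G t := by
    simp only [G, mul_add, mul_one_div_cancel hNR]
    push_cast
    rw [hφ, mul_add, e_add]
    field_simp
  have hroot : e (-(h : ℂ) / N) ≠ 1 := by
    rw [Ne, e_eq_one_iff]
    rintro ⟨n, hn⟩
    refine hdvd ⟨-n, ?_⟩
    rw [div_eq_iff (Nat.cast_ne_zero.mpr hN)] at hn
    exact_mod_cast (by linear_combination -hn : (h : ℂ) = N * -n)
  have hfixed : fourierCoeff01 (fun t => φ (N * t)) h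
      = e (-(h : ℂ) / N) * fourierCoeff01 (fun t => φ (N * t)) h := calc
    ∫ t in (0 : ℝ)..1, G t = ∫ t in (0 : ℝ)..1, G (t + 1 / N) := by
      rw [integral_comp_add_right, zero_add, add_comm, hG.intervalIntegral_add_eq (1 / N) 0,
        zero_add]
    _ = _ := by simp only [hshift, intervalIntegral.integral_const_mul]; rfl
  by_contra hne
  exact hroot ((mul_eq_right₀ hne).mp hfixed.symm)

lemma fourierCoeff01_comp_nat_mul {φ : ℝ → ℂ} (hφ : Function.Periodic φ 1)
    (hφc : Continuous φ) {N : ℕ} (hN : N ≠ 0) (h : ℤ) :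
    fourierCoeff01 (fun t => φ (N * t)) h
      = if (N : ℤ) ∣ h then fourierCoeff01 φ (h / N) else 0 := by
  split_ifs with hdvd
  · obtain ⟨m, rfl⟩ := hdvd
    rw [Int.mul_ediv_cancel_left _ (Nat.cast_ne_zero.mpr hN)]
    exact fourierCoeff01_comp_nat_mul_mul hφ hφc hN m
  · exact fourierCoeff01_comp_nat_mul_of_not_dvd hφ hN hdvd

lemma norm_coe_unitAddCircle_of_mem_Icc {x : ℝ} (hx : x ∈ Icc 0 (1 / 2)) :
    ‖(x : UnitAddCircle)‖ = x := by
  have hx' : |x| ≤ |(1 : ℝ)| / 2 := by rw [abs_one, abs_of_nonneg hx.1]; exact hx.2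
  rw [(AddCircle.norm_coe_eq_abs_iff _ one_ne_zero).mpr hx', abs_of_nonneg hx.1]

lemma norm_coe_unitAddCircle_one_sub (x : ℝ) :
    ‖((1 - x : ℝ) : UnitAddCircle)‖ = ‖(x : UnitAddCircle)‖ := by
  rw [AddCircle.coe_sub, AddCircle.coe_period, zero_sub, norm_neg]

lemma periodic_norm_coe_unitAddCircle :
    Function.Periodic (fun u : ℝ => (‖(u : UnitAddCircle)‖ : ℂ)) 1 := fun u => by
  simp only [AddCircle.coe_add_period]

lemma hasDerivAt_mul_cexp {a : ℂ} (ha : a ≠ 0) (u : ℝ) :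
    HasDerivAt (fun x : ℝ => ((x : ℂ) / a - 1 / a ^ 2) * cexp (a * x))
      (u * cexp (a * u)) u := by
  have hexp : HasDerivAt (fun x : ℝ => cexp (a * x)) (cexp (a * u) * a) u :=
    ((hasDerivAt_id (u : ℂ)).const_mul a).cexp.comp_ofReal.congr_deriv (by simp)
  have hid : HasDerivAt (fun x : ℝ => (x : ℂ)) 1 u := (hasDerivAt_id u).ofReal_comp
  refine (((hid.div_const a).sub_const (1 / a ^ 2)).mul hexp).congr_deriv ?_
  field_simp
  ring

lemma integral_mul_cexp {a : ℂ} (ha : a ≠ 0) (x y : ℝ) :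
    ∫ u in x..y, (u : ℂ) * cexp (a * u)
      = ((y : ℂ) / a - 1 / a ^ 2) * cexp (a * y) - ((x : ℂ) / a - 1 / a ^ 2) * cexp (a * x) :=
  integral_eq_sub_of_hasDerivAt (fun u _ => hasDerivAt_mul_cexp ha u)
    ((by fun_prop : Continuous fun u : ℝ => (u : ℂ) * cexp (a * u)).intervalIntegrable _ _)

lemma integral_norm_coe_unitAddCircle_mul_cexp {a : ℂ} (ha : a ≠ 0) :
    ∫ u in (0 : ℝ)..1, (‖(u : UnitAddCircle)‖ : ℂ) * cexp (a * u)
      = (1 - cexp (a / 2)) ^ 2 / a ^ 2 := by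
  have hcont : Continuous fun u : ℝ => (‖(u : UnitAddCircle)‖ : ℂ) * cexp (a * u) := by
    fun_prop
  have hleft : ∫ u in (0 : ℝ)..1 / 2, (‖(u : UnitAddCircle)‖ : ℂ) * cexp (a * u)
      = ∫ u in (0 : ℝ)..1 / 2, (u : ℂ) * cexp (a * u) := by
    refine integral_congr fun u hu => ?_
    rw [uIcc_of_le (by norm_num)] at hu
    simp only [norm_coe_unitAddCircle_of_mem_Icc hu]
  have hright : ∫ u in (1 / 2 : ℝ)..1, (‖(u : UnitAddCircle)‖ : ℂ) * cexp (a * u)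
      = (∫ u in (1 / 2 : ℝ)..1, cexp (a * u))
        - ∫ u in (1 / 2 : ℝ)..1, (u : ℂ) * cexp (a * u) := by
    rw [← integral_sub
      ((by fun_prop : Continuous fun u : ℝ => cexp (a * u)).intervalIntegrable _ _)
      ((by fun_prop : Continuous fun u : ℝ => (u : ℂ) * cexp (a * u)).intervalIntegrable _ _)]
    refine integral_congr fun u hu => ?_
    rw [uIcc_of_le (by norm_num)] at hu
    rw [← norm_coe_unitAddCircle_one_sub,
      norm_coe_unitAddCircle_of_mem_Icc ⟨by linarith [hu.2], by linarith [hu.1]⟩]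
    push_cast
    ring
  have hsq : cexp a = cexp (a / 2) ^ 2 := by
    rw [← Complex.exp_nat_mul]
    ring_nf
  rw [← integral_add_adjacent_intervals (b := 1 / 2) (hcont.intervalIntegrable _ _)
    (hcont.intervalIntegrable _ _), hleft, hright, integral_mul_cexp ha, integral_mul_cexp ha,
    integral_exp_mul_complex ha]
  push_cast
  simp only [mul_zero, Complex.exp_zero, mul_one, mul_one_div, hsq]
  field_simp
  ring

lemma fourierCoeff01_norm_coe_unitAddCircle {m : ℤ} (hm : m ≠ 0) :
    fourierCoeff01 (fun u => (‖(u : UnitAddCircle)‖ : ℂ)) m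
      = if Even m then 0 else -1 / ((π : ℂ) ^ 2 * m ^ 2) := by
  set a : ℂ := -(2 * π * I * m)
  have ha : a ≠ 0 := neg_ne_zero.2 (mul_ne_zero two_pi_I_ne_zero (Int.cast_ne_zero.2 hm))
  have hkernel (u : ℝ) : e (-(m : ℂ) * u) = cexp (a * u) := by
    simp only [e, a]
    ring_nf
  have hhalf : cexp (a / 2) = (-1) ^ m := by
    rw [show a / 2 = m * -(π * I) by ring, exp_int_mul, Complex.exp_neg, exp_pi_mul_I, inv_neg,
      inv_one]
  have hsq : a ^ 2 = -(4 * π ^ 2 * m ^ 2) := by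
    simp only [a]
    ring_nf
    rw [I_sq]
    ring
  simp only [fourierCoeff01, hkernel]
  rw [integral_norm_coe_unitAddCircle_mul_cexp ha, hhalf, hsq]
  rcases Int.even_or_odd m with hm2 | hm2
  · rw [if_pos hm2, hm2.neg_one_zpow, sub_self, zero_pow two_ne_zero, zero_div]
  · rw [if_neg (Int.not_even_iff_odd.2 hm2), hm2.neg_one_zpow]
    field_simp
    norm_num

lemma even_ediv_two_pow_iff {h : ℤ} {j : ℕ} (hj : 2 ^ j ∣ h) :
    Even (h / 2 ^ j) ↔ 2 ^ (j + 1) ∣ h := by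
  obtain ⟨m, rfl⟩ := hj
  rw [Int.mul_ediv_cancel_left _ (by positivity), pow_succ, mul_dvd_mul_iff_left (by positivity),
    even_iff_two_dvd]

lemma two_pow_dvd_and_not_even_ediv_iff {h : ℤ} (hh : h ≠ 0) (j : ℕ) :
    (2 ^ j ∣ h ∧ ¬Even (h / 2 ^ j)) ↔ j = padicValInt 2 h := by
  have hdvd (n : ℕ) : (2 : ℤ) ^ n ∣ h ↔ n ≤ padicValInt 2 h := by
    exact_mod_cast (padicValInt_dvd_iff (p := 2) n h).trans (or_iff_right hh)
  rw [and_congr_right fun hj => (even_ediv_two_pow_iff hj).not, hdvd, hdvd]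
  omega

lemma two_pow_padicValInt_div_le {h : ℤ} (hh : h ≠ 0) :
    2 ^ padicValInt 2 h / (π ^ 2 * h ^ 2) ≤ 1 / (π * |(h : ℝ)|) := by
  have hv : (2 : ℝ) ^ padicValInt 2 h ≤ |(h : ℝ)| := by
    have := Int.le_of_dvd (abs_pos.2 hh) ((dvd_abs _ _).2 (padicValInt_dvd (p := 2) h))
    exact_mod_cast this
  have hh' : 0 < |(h : ℝ)| := abs_pos.2 (Int.cast_ne_zero.2 hh)
  calc (2 : ℝ) ^ padicValInt 2 h / (π ^ 2 * h ^ 2)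
    _ ≤ |(h : ℝ)| / (π ^ 2 * |(h : ℝ)| ^ 2) := by rw [sq_abs]; gcongr
    _ = 1 / (π ^ 2 * |(h : ℝ)|) := by field_simp
    _ ≤ 1 / (π * |(h : ℝ)|) := by
      gcongr
      nlinarith [pi_gt_three]

lemma takagi_eq_tsum (t : ℝ) :
    takagi t = ∑' j : ℕ, ‖((2 ^ j * t : ℝ) : UnitAddCircle)‖ / 2 ^ j := by
  simp [takagi, AddCircle.norm_eq]

lemma norm_coe_unitAddCircle_div_two_pow_le (j : ℕ) (x : ℝ) :
    ‖(x : UnitAddCircle)‖ / 2 ^ j ≤ (1 / 2) ^ j := by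
  rw [one_div_pow]
  gcongr
  exact (AddCircle.norm_le_half_period 1 one_ne_zero).trans (by norm_num)

lemma continuous_takagi : Continuous takagi := by
  rw [funext takagi_eq_tsum]
  refine continuous_tsum (fun j => by fun_prop) summable_geometric_two fun j t => ?_
  rw [Real.norm_of_nonneg (by positivity)]
  exact norm_coe_unitAddCircle_div_two_pow_le j _

lemma takagi_zero : takagi 0 = 0 := by
  simp [takagi_eq_tsum]

lemma takagi_one : takagi 1 = 0 := by
  simp only [takagi_eq_tsum, mul_one]
  refine (tsum_congr fun j => ?_).trans tsum_zero
  rw [(AddCircle.coe_eq_zero_iff _).2 ⟨2 ^ j, by simp⟩, norm_zero, zero_div]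

lemma fourierCoeff01_takagi_term {h : ℤ} (hh : h ≠ 0) (j : ℕ) :
    fourierCoeff01 (fun t => ((‖((2 ^ j * t : ℝ) : UnitAddCircle)‖ / 2 ^ j : ℝ) : ℂ)) h
      = if j = padicValInt 2 h then -(2 ^ j / ((π : ℂ) ^ 2 * h ^ 2)) else 0 := by
  have hdilate : (fun t => ((‖((2 ^ j * t : ℝ) : UnitAddCircle)‖ / 2 ^ j : ℝ) : ℂ))
      = fun t => ((2 : ℂ) ^ j)⁻¹ * ‖(((2 ^ j : ℕ) * t : ℝ) : UnitAddCircle)‖ := by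
    funext t
    push_cast
    ring
  rw [hdilate, fourierCoeff01_const_mul, fourierCoeff01_comp_nat_mul
    periodic_norm_coe_unitAddCircle (by fun_prop) (pow_ne_zero j two_ne_zero)]
  push_cast
  have hval := two_pow_dvd_and_not_even_ediv_iff hh j
  by_cases hj : 2 ^ j ∣ h
  · have hq : h / 2 ^ j ≠ 0 := fun h0 => hh (by rw [← Int.ediv_mul_cancel hj, h0, zero_mul])
    rw [if_pos hj, fourierCoeff01_norm_coe_unitAddCircle hq]
    by_cases hv : j = padicValInt 2 h
    · rw [if_pos hv, if_neg (hval.2 hv).2]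
      obtain ⟨m, rfl⟩ := hj
      rw [Int.mul_ediv_cancel_left _ (by positivity)]
      push_cast
      field_simp
    · rw [if_neg hv, if_pos (not_not.1 fun hodd => hv (hval.1 ⟨hj, hodd⟩)), mul_zero]
  · rw [if_neg hj, if_neg fun hv => hj (hval.2 hv).1, mul_zero]

lemma fourierCoeff01_takagi {h : ℤ} (hh : h ≠ 0) :
    fourierCoeff01 (fun t => (takagi t : ℂ)) h
      = ((-(2 ^ padicValInt 2 h / (π ^ 2 * h ^ 2)) : ℝ) : ℂ) := by
  have hsum := hasSum_fourierCoeff01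
    (F := fun j t => ((‖((2 ^ j * t : ℝ) : UnitAddCircle)‖ / 2 ^ j : ℝ) : ℂ))
    (fun j => by fun_prop) summable_geometric_two
    (fun j t => by
      rw [norm_real, Real.norm_of_nonneg (by positivity)]
      exact norm_coe_unitAddCircle_div_two_pow_le j _) h
  have hτ : (fun t => (takagi t : ℂ))
      = fun t => ∑' j : ℕ, ((‖((2 ^ j * t : ℝ) : UnitAddCircle)‖ / 2 ^ j : ℝ) : ℂ) :=
    funext fun t => by rw [takagi_eq_tsum, ofReal_tsum]
  rw [hτ, ← hsum.tsum_eq, tsum_congr (fourierCoeff01_takagi_term hh), tsum_ite_eq]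
  push_cast
  rfl

/-- The graph path of the Takagi function, f(t) = t + i·τ(t), belongs to S. -/
theorem stmt_15 :
    memS (fun t : ℝ => (t : ℂ) + Complex.I * (takagi t : ℂ)) := by
  have hτ := continuous_takagi
  refine ⟨by fun_prop, by simp [takagi_zero], by simp [takagi_one], by simp [takagi_one],
    fun h hh => ?_⟩
  simp only [takagi_one, ofReal_zero, ofReal_one, mul_zero, add_zero, mul_one, add_sub_cancel_left,
    fourierCoeff01_const_mul, fourierCoeff01_takagi hh]
  refine ⟨by rw [I_mul_re, ofReal_im, neg_zero], ?_⟩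
  rw [norm_mul, norm_I, one_mul, norm_real, norm_neg, Real.norm_of_nonneg (by positivity)]
  exact two_pow_padicValInt_div_le hh

end
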